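/- For j ≤ ⌊d/2⌋ and 0 ≤ i ≤ j-1, the binomial inequality j·C(d-2i, j-i) ≥ (d-j+1)·C(d-2i, j-i-1) holds. -/

import Mathlib

/-! Since `C(n, k+1) (k+1) = C(n, k) (n-k)`, with `n = d - 2i` and `k = j - i - 1` the inequality
reduces to `(d-j+1)(j-i) ≤ j(d-j+1-i)`, i.e. to `i j ≤ i (d-j+1)`, which holds because `j ≤ d - j`. -/

theorem Nat.mul_choose_le_mul_choose_succ {n k a b : ℕ} (h : a * (k + 1) ≤ b * (n - k)) :
    a * n.choose k ≤ b * n.choose (k + 1) := by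
  refine Nat.le_of_mul_le_mul_right ?_ k.succ_pos
  calc a * n.choose k * (k + 1) = a * (k + 1) * n.choose k := by ring
    _ ≤ b * (n - k) * n.choose k := Nat.mul_le_mul_right _ h
    _ = b * n.choose (k + 1) * (k + 1) := by
      rw [mul_assoc b (n.choose _), Nat.choose_succ_right_eq]; ring

theorem Nat.mul_sub_le_mul_sub_of_le {i j m : ℕ} (hjm : j ≤ m) : m * (j - i) ≤ j * (m - i) :=
  calc m * (j - i) = j * m - m * i := by rw [Nat.mul_sub, mul_comm m j]
    _ ≤ j * m - j * i := Nat.sub_le_sub_left (Nat.mul_le_mul_right i hjm) _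
    _ = j * (m - i) := (Nat.mul_sub j m i).symm

/-- For `j ≤ ⌊d/2⌋` and `0 ≤ i ≤ j-1`, the binomial inequality
`j·C(d-2i, j-i) ≥ (d-j+1)·C(d-2i, j-i-1)` holds. -/
theorem binomial_inequality (d i j : ℕ) (hij : i + 1 ≤ j) (hjd : 2 * j ≤ d) :
    (d - j + 1) * (d - 2 * i).choose (j - i - 1) ≤ j * (d - 2 * i).choose (j - i) := by
  obtain ⟨k, hk⟩ : ∃ k, j - i = k + 1 := ⟨j - i - 1, by omega⟩
  rw [hk, Nat.add_sub_cancel]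
  apply Nat.mul_choose_le_mul_choose_succ
  rw [← hk, show d - 2 * i - k = d - j + 1 - i by omega]
  exact Nat.mul_sub_le_mul_sub_of_le (by omega)
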